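/- If T is a trigraph in the class T1, then T does not contain an antihole of length at least 7. -/

import Mathlib

structure Trigraph (V : Type*) where
  θ : V → V → ℤ
  symm : ∀ u v, θ u v = θ v u
  range : ∀ u v, u ≠ v → θ u v = -1 ∨ θ u v = 0 ∨ θ u v = 1

namespace Trigraph

variable {V : Type*}

/-- `u` and `v` form a strong edge. -/
def SEdge (T : Trigraph V) (u v : V) : Prop := u ≠ v ∧ T.θ u v = 1

/-- `u` and `v` form a strong antiedge. -/
def SAnti (T : Trigraph V) (u v : V) : Prop := u ≠ v ∧ T.θ u v = -1

/-- `u` and `v` form a switchable pair. -/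
def Switch (T : Trigraph V) (u v : V) : Prop := u ≠ v ∧ T.θ u v = 0

/-- `u` and `v` are adjacent. -/
def Adj (T : Trigraph V) (u v : V) : Prop := u ≠ v ∧ (T.θ u v = 0 ∨ T.θ u v = 1)

/-- `u` and `v` are antiadjacent. -/
def Anti (T : Trigraph V) (u v : V) : Prop := u ≠ v ∧ (T.θ u v = -1 ∨ T.θ u v = 0)

instance [DecidableEq V] (T : Trigraph V) (u v : V) : Decidable (T.Adj u v) :=
  inferInstanceAs (Decidable (u ≠ v ∧ (T.θ u v = 0 ∨ T.θ u v = 1)))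

instance [DecidableEq V] (T : Trigraph V) (u v : V) : Decidable (T.Anti u v) :=
  inferInstanceAs (Decidable (u ≠ v ∧ (T.θ u v = -1 ∨ T.θ u v = 0)))

instance [DecidableEq V] (T : Trigraph V) (u v : V) : Decidable (T.Switch u v) :=
  inferInstanceAs (Decidable (u ≠ v ∧ T.θ u v = 0))

instance [DecidableEq V] (T : Trigraph V) (u v : V) : Decidable (T.SAnti u v) :=
  inferInstanceAs (Decidable (u ≠ v ∧ T.θ u v = -1))

/-- A trigraph is monogamous if every vertex is in at most one switchable pair. -/
def Monogamous (T : Trigraph V) : Prop :=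
  ∀ v u w : V, T.Switch v u → T.Switch v w → u = w

/-- The complement trigraph. -/
def compl (T : Trigraph V) : Trigraph V where
  θ := fun u v => -(T.θ u v)
  symm := fun u v => congrArg Neg.neg (T.symm u v)
  range := fun u v h => by
    have := T.range u v h
    try dsimp only
    omega

def IsBull (T : Trigraph V) (x1 x2 x3 y z : V) : Prop :=
  T.Adj x1 x2 ∧ T.Adj x1 x3 ∧ T.Adj x2 x3 ∧
  T.Adj y x1 ∧ T.Anti y x2 ∧ T.Anti y x3 ∧ T.Anti y z ∧
  T.Adj z x2 ∧ T.Anti z x1 ∧ T.Anti z x3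

def BullFree (T : Trigraph V) : Prop := ∀ x1 x2 x3 y z : V, ¬ T.IsBull x1 x2 x3 y z

/-- `S` is strongly complete to `A`. -/
def SComplete (T : Trigraph V) (S A : Set V) : Prop := ∀ s ∈ S, ∀ a ∈ A, T.SEdge s a

/-- `S` is strongly anticomplete to `A`. -/
def SAnticomplete (T : Trigraph V) (S A : Set V) : Prop := ∀ s ∈ S, ∀ a ∈ A, T.SAnti s a

/-- A homogeneous set. -/
def HomSet (T : Trigraph V) (X : Set V) : Prop :=
  1 < X.ncard ∧ X.ncard < Nat.card V ∧
  ∀ v ∉ X, (∀ a ∈ X, T.SEdge v a) ∨ (∀ a ∈ X, T.SAnti v a)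

/-- `(A,B,C,D,E,F)` is a split of the homogeneous pair `(A,B)`. -/
def IsSplit (T : Trigraph V) (A B C D E F : Set V) : Prop :=
  A.Nonempty ∧ B.Nonempty ∧ Disjoint A B ∧
  Disjoint C D ∧ Disjoint C E ∧ Disjoint C F ∧
  Disjoint D E ∧ Disjoint D F ∧ Disjoint E F ∧
  C ∪ D ∪ E ∪ F = (A ∪ B)ᶜ ∧
  T.SComplete A (C ∪ E) ∧ T.SAnticomplete A (D ∪ F) ∧
  T.SComplete B (D ∪ E) ∧ T.SAnticomplete B (C ∪ F) ∧
  ¬ T.SComplete A B ∧ ¬ T.SAnticomplete A B ∧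
  3 ≤ (A ∪ B).ncard ∧ 3 ≤ (C ∪ D ∪ E ∪ F).ncard

/-- `(A,B)` is a homogeneous pair. -/
def HomPair (T : Trigraph V) (A B : Set V) : Prop := ∃ C D E F, T.IsSplit A B C D E F

/-- A small homogeneous pair. -/
def SmallHomPair (T : Trigraph V) (A B : Set V) : Prop :=
  T.HomPair A B ∧ (A ∪ B).ncard ≤ 6

/-- A proper homogeneous pair. -/
def ProperHomPair (T : Trigraph V) (A B : Set V) : Prop :=
  ∃ C D E F, T.IsSplit A B C D E F ∧ C.Nonempty ∧ D.Nonempty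

/-- `(X, Xᶜ)` is a decomposition of `T`. -/
def Decomp (T : Trigraph V) (X : Set V) : Prop :=
  T.HomSet X ∨ ∃ A B, X = A ∪ B ∧ (T.SmallHomPair A B ∨ T.ProperHomPair A B)

/-- `(X, Xᶜ)` is a homogeneous cut of `T`. -/
def HomCut (T : Trigraph V) (X : Set V) : Prop :=
  T.HomSet X ∨ ∃ A B, X = A ∪ B ∧ T.ProperHomPair A B

/-- A minimally-sided homogeneous cut. -/
def MinSidedHomCut (T : Trigraph V) (X : Set V) : Prop :=
  T.HomCut X ∧ ∀ X' : Set V, T.HomCut X' → ¬ X' ⊂ X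

/-- The induced subtrigraph on `X`. -/
def induce (T : Trigraph V) (X : Set V) : Trigraph X where
  θ := fun u v => T.θ u v
  symm := fun u v => T.symm u v
  range := fun u v h => T.range u v (fun hh => h (Subtype.ext hh))

open Classical in
/-- The trigraph obtained from `T[X]` by adding two marker vertices joined by a switchable
pair, the first strongly complete to (the trace in `X` of) `P` and strongly anticomplete to
the rest of `X`, the second strongly complete to `Q` and strongly anticomplete to the rest. -/
noncomputable def augment2 (T : Trigraph V) (X P Q : Set V) : Trigraph (↥X ⊕ Fin 2) where
  θ := fun u v =>
    match u, v with
    | Sum.inl u, Sum.inl v => T.θ u v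
    | Sum.inl u, Sum.inr i => if (i = 0 ∧ (u : V) ∈ P) ∨ (i = 1 ∧ (u : V) ∈ Q) then 1 else -1
    | Sum.inr i, Sum.inl u => if (i = 0 ∧ (u : V) ∈ P) ∨ (i = 1 ∧ (u : V) ∈ Q) then 1 else -1
    | Sum.inr _, Sum.inr _ => 0
  symm := by
    rintro (u | i) (v | j)
    · exact T.symm u v
    · rfl
    · rfl
    · rfl
  range := by
    rintro (u | i) (v | j) h
    · exact T.range u v fun hh => h (by rw [Subtype.ext hh])
    · dsimp only; split <;> simp
    · dsimp only; split <;> simp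
    · simp

/-- The block of decomposition `T_X` for a proper homogeneous pair `(A,B)`:
`T[A ∪ B]` together with marker vertices `c` (strongly complete to `A`) and `d`
(strongly complete to `B`), with `cd` a switchable pair. -/
noncomputable def blockXPair (T : Trigraph V) (A B : Set V) : Trigraph (↥(A ∪ B) ⊕ Fin 2) :=
  T.augment2 (A ∪ B) A B

/-- The block of decomposition `T_Y` for a homogeneous pair `(A,B)` with split
`(A,B,C,D,E,F)` : `T[Y]` (where `Y = (A ∪ B)ᶜ`) together with marker vertices `a`
(strongly complete to `C ∪ E`) and `b` (strongly complete to `D ∪ E`), with `ab` a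
switchable pair. -/
noncomputable def blockYPair (T : Trigraph V) (A B C D E : Set V) : Trigraph (↥(A ∪ B)ᶜ ⊕ Fin 2) :=
  T.augment2 (A ∪ B)ᶜ (C ∪ E) (D ∪ E)


/-- A strong clique: vertices pairwise strongly adjacent. -/
def StrongClique (T : Trigraph V) (K : Set V) : Prop := K.Pairwise T.SEdge

/-- A strong stable set: vertices pairwise strongly antiadjacent. -/
def StrongStable (T : Trigraph V) (K : Set V) : Prop := K.Pairwise T.SAnti

/-- `T[X]` is triangle-free. -/
def TriangleFreeOn (T : Trigraph V) (X : Set V) : Prop :=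
  ∀ x ∈ X, ∀ y ∈ X, ∀ z ∈ X, ¬ (T.Adj x y ∧ T.Adj x z ∧ T.Adj y z)

/-- Membership in the basic class `𝒯₁`. -/
def InT1 (T : Trigraph V) : Prop :=
  T.Monogamous ∧ ∃ (X : Set V) (t : ℕ) (K : Fin t → Set V),
    (X ∪ ⋃ i, K i) = Set.univ ∧
    (∀ i, Disjoint X (K i)) ∧ (∀ i j, i ≠ j → Disjoint (K i) (K j)) ∧
    T.TriangleFreeOn X ∧ (∀ i, T.StrongClique (K i)) ∧
    (∀ i j, i ≠ j → T.SAnticomplete (K i) (K j)) ∧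
    (∀ i, ∀ v ∈ K i, ∃ A B : Set V,
      A ∪ B = {x ∈ X | T.Adj v x} ∧ Disjoint A B ∧
      T.StrongStable A ∧ T.StrongStable B ∧ T.SComplete A B)

/-- Membership in the basic class `𝒯₀`: monogamous trigraphs on at most 8 vertices. -/
def InT0 (T : Trigraph V) : Prop := T.Monogamous ∧ Nat.card V ≤ 8

/-- A basic trigraph: a member of `𝒯₀ ∪ 𝒯₁ ∪ 𝒯₁bar`. -/
def Basic (T : Trigraph V) : Prop := T.InT0 ∨ T.InT1 ∨ T.compl.InT1

/-- `h` lists the vertices of a hole of length `k` in `T`. -/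
def IsHole (T : Trigraph V) (k : ℕ) (h : Fin k → V) : Prop :=
  4 ≤ k ∧ Function.Injective h ∧ ∀ i j : Fin k,
    (((i.val + 1) % k = j.val ∨ (j.val + 1) % k = i.val) → T.Adj (h i) (h j)) ∧
    (i ≠ j → ¬ ((i.val + 1) % k = j.val ∨ (j.val + 1) % k = i.val) → T.Anti (h i) (h j))

def HasOddHole (T : Trigraph V) : Prop := ∃ k, Odd k ∧ ∃ h : Fin k → V, T.IsHole k h

/-- A Berge trigraph: no odd hole and no odd antihole. -/
def Berge (T : Trigraph V) : Prop := ¬ T.HasOddHole ∧ ¬ T.compl.HasOddHole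

/-- `(wv, we)` are legitimate weights for the trigraph `T`: `we` is symmetric and for every
switchable pair `uv` we have `max (wv u) (wv v) ≤ we u v ≤ wv u + wv v`. -/
def GoodWeights (T : Trigraph V) (wv : V → ℕ) (we : V → V → ℕ) : Prop :=
  (∀ u v, we u v = we v u) ∧
  ∀ u v, T.Switch u v → max (wv u) (wv v) ≤ we u v ∧ we u v ≤ wv u + wv v

/-- `S` is a stable set of `T`. -/
def StableF (T : Trigraph V) (S : Finset V) : Prop :=
  ∀ u ∈ S, ∀ v ∈ S, u ≠ v → T.Anti u v

open Classical in
/-- The weight of a stable set `S`: the sum of the weights of the vertices of `S` that are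
strongly antiadjacent to every other vertex of `S`, plus the sum of the weights of the
switchable pairs with both ends in `S`. -/
noncomputable def weightF (T : Trigraph V) (wv : V → ℕ) (we : V → V → ℕ) (S : Finset V) : ℕ :=
  (∑ v ∈ S.filter (fun v => ∀ u ∈ S, u ≠ v → T.SAnti u v), wv v)
    + (∑ u ∈ S, ∑ v ∈ S, if T.Switch u v then we u v else 0) / 2

open Classical in
/-- The maximum weight of a stable set of `T` contained in `X`. -/
noncomputable def alphaOn [Fintype V] (T : Trigraph V) (wv : V → ℕ) (we : V → V → ℕ)
    (X : Set V) : ℕ :=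
  (Finset.univ.powerset.filter fun S : Finset V => ↑S ⊆ X ∧ T.StableF S).sup (T.weightF wv we)

/-- The maximum weight of a stable set of `T`. -/
noncomputable def alphaW [Fintype V] (T : Trigraph V) (wv : V → ℕ) (we : V → V → ℕ) : ℕ :=
  T.alphaOn wv we Set.univ

open Classical in
/-- The trigraph `T_{a → S}` obtained from `T` by turning the switchable pair `ab` into a
strong edge and adding a new vertex `a' = none` strongly complete to `N(a) ∖ {b}` and
strongly anticomplete to everything else (including `a`). -/
noncomputable def expandS (T : Trigraph V) (a b : V) : Trigraph (Option V) where
  θ := fun u v =>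
    match u, v with
    | some u, some v => if (u = a ∧ v = b) ∨ (u = b ∧ v = a) then 1 else T.θ u v
    | some u, none => if T.Adj a u ∧ u ≠ b then 1 else -1
    | none, some v => if T.Adj a v ∧ v ≠ b then 1 else -1
    | none, none => -1
  symm := by
    rintro (_ | u) (_ | v)
    · rfl
    · rfl
    · rfl
    · dsimp only
      have hiff : ((u = a ∧ v = b) ∨ (u = b ∧ v = a)) ↔ ((v = a ∧ u = b) ∨ (v = b ∧ u = a)) := by
        tauto
      rw [if_congr hiff rfl (T.symm u v)]
  range := by
    rintro (_ | u) (_ | v) h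
    · exact absurd rfl h
    · dsimp only; split <;> simp
    · dsimp only; split <;> simp
    · dsimp only
      split
      · simp
      · exact T.range u v fun hh => h (by rw [hh])

open Classical in
/-- The trigraph `T_{a → K}`, defined like `T_{a → S}` except that the new vertex `a'` is in
addition strongly adjacent to `a`. -/
noncomputable def expandK (T : Trigraph V) (a b : V) : Trigraph (Option V) where
  θ := fun u v =>
    match u, v with
    | some u, some v => if (u = a ∧ v = b) ∨ (u = b ∧ v = a) then 1 else T.θ u v
    | some u, none => if (T.Adj a u ∧ u ≠ b) ∨ u = a then 1 else -1
    | none, some v => if (T.Adj a v ∧ v ≠ b) ∨ v = a then 1 else -1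
    | none, none => -1
  symm := by
    rintro (_ | u) (_ | v)
    · rfl
    · rfl
    · rfl
    · dsimp only
      have hiff : ((u = a ∧ v = b) ∨ (u = b ∧ v = a)) ↔ ((v = a ∧ u = b) ∨ (v = b ∧ u = a)) := by
        tauto
      rw [if_congr hiff rfl (T.symm u v)]
  range := by
    rintro (_ | u) (_ | v) h
    · exact absurd rfl h
    · dsimp only; split <;> simp
    · dsimp only; split <;> simp
    · dsimp only
      split
      · simp
      · exact T.range u v fun hh => h (by rw [hh])

/-- Vertex weights for `T_{a → S}`. -/
def wvS (wv : V → ℕ) (we : V → V → ℕ) (a b : V) [DecidableEq V] : Option V → ℕ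
  | some v => if v = a then wv a + wv b - we a b else wv v
  | none => we a b - wv b

/-- Vertex weights for `T_{a → K}`. -/
def wvK (wv : V → ℕ) (we : V → V → ℕ) (a b : V) : Option V → ℕ
  | some v => wv v
  | none => we a b - wv b

/-- Switchable-pair weights for `T_{a → S}` and `T_{a → K}`. -/
def weO (we : V → V → ℕ) : Option V → Option V → ℕ
  | some u, some v => we u v
  | _, _ => 0

end Trigraph

/-!
Index the antihole periodically by `ℤ`. Two of its vertices lying in the cliques `Kᵢ` are in the
same clique if they are nonconsecutive, and in different cliques if they are consecutive. So if two
consecutive vertices `n, n + 1` lie outside `X`, every vertex at distance at least two from both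
lies in `X`; in particular `n + 3, n + 4, n + 5` are neighbours of `n` in `X` forming an antipath,
which the complete bipartite neighbourhood of a clique vertex cannot contain. Otherwise no two
consecutive vertices lie outside `X`, and `X` contains three pairwise nonconsecutive vertices,
a triangle of `T[X]` since `k ≥ 7`.
-/

namespace Trigraph

variable {V : Type*} {T : Trigraph V} {u v : V}

lemma Anti.symm (h : T.Anti u v) : T.Anti v u :=
  ⟨h.1.symm, by rw [T.symm]; exact h.2⟩

lemma Adj.not_sAnti (h : T.Adj u v) : ¬ T.SAnti u v := fun h' => by
  have := h.2; have := h'.2; omega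

lemma Anti.not_sEdge (h : T.Anti u v) : ¬ T.SEdge u v := fun h' => by
  have := h.2; have := h'.2; omega

lemma compl_adj_iff : T.compl.Adj u v ↔ T.Anti u v :=
  and_congr_right fun _ => show -T.θ u v = 0 ∨ -T.θ u v = 1 ↔ _ by omega

lemma compl_anti_iff : T.compl.Anti u v ↔ T.Adj u v :=
  and_congr_right fun _ => show -T.θ u v = -1 ∨ -T.θ u v = 0 ↔ _ by omega

/-- A walk around an antihole of length `k` along `ℤ`. Only pairs at distance at most `k - 2` are
constrained, so arguments about it need no arithmetic modulo `k`. -/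
structure IsAntiholeWalk (T : Trigraph V) (k : ℕ) (f : ℤ → V) : Prop where
  anti : ∀ m n : ℤ, n = m + 1 → T.Anti (f m) (f n)
  adj : ∀ m n : ℤ, 2 ≤ n - m → n - m + 2 ≤ k → T.Adj (f m) (f n)

lemma exists_isAntiholeWalk_of_isHole_compl {k : ℕ} {h : Fin k → V}
    (hh : T.compl.IsHole k h) : ∃ f : ℤ → V, T.IsAntiholeWalk k f := by
  obtain ⟨hk, -, hcycle⟩ := hh
  have : NeZero k := ⟨by omega⟩
  have : Fact (1 < k) := ⟨by omega⟩
  let F : ℤ → Fin k := fun n => ⟨(n : ZMod k).val, ZMod.val_lt _⟩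
  have F_eq_iff : ∀ m n : ℤ, F m = F n ↔ (k : ℤ) ∣ n - m := fun m n => by
    rw [← ZMod.intCast_eq_intCast_iff_dvd_sub, Fin.ext_iff, (ZMod.val_injective k).eq_iff]
  have succ_eq_iff : ∀ m n : ℤ, ((F m).val + 1) % k = (F n).val ↔ (k : ℤ) ∣ n - (m + 1) :=
    fun m n => by
      rw [← ZMod.intCast_eq_intCast_iff_dvd_sub, ← ZMod.val_one k, ← ZMod.val_add,
        (ZMod.val_injective k).eq_iff, Int.cast_add, Int.cast_one]
  have not_dvd : ∀ x : ℤ, x ≠ 0 → -k < x → x < k → ¬ (k : ℤ) ∣ x :=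
    fun x hx hlo hhi hdvd => hx (Int.eq_zero_of_abs_lt_dvd hdvd (abs_lt.mpr ⟨hlo, hhi⟩))
  refine ⟨fun n => h (F n), fun m n hmn => ?_, fun m n hlo hhi => ?_⟩
  · refine compl_adj_iff.mp ((hcycle (F m) (F n)).1 (Or.inl ((succ_eq_iff m n).mpr ?_)))
    simp [hmn]
  · refine compl_anti_iff.mp ((hcycle (F m) (F n)).2 ?_ ?_)
    · exact fun he => not_dvd (n - m) (by omega) (by omega) (by omega) ((F_eq_iff m n).mp he)
    · rintro (he | he)
      · exact not_dvd _ (by omega) (by omega) (by omega) ((succ_eq_iff m n).mp he)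
      · exact not_dvd _ (by omega) (by omega) (by omega) ((succ_eq_iff n m).mp he)

lemma StrongClique.not_anti {K : Set V} (hK : T.StrongClique K) (hu : u ∈ K) (hv : v ∈ K) :
    ¬ T.Anti u v :=
  fun h => h.not_sEdge (hK hu hv h.1)

lemma eq_of_adj_of_sAnticomplete {ι : Type*} {K : ι → Set V}
    (hKK : ∀ i j, i ≠ j → T.SAnticomplete (K i) (K j)) {i j : ι} (hu : u ∈ K i) (hv : v ∈ K j)
    (h : T.Adj u v) : i = j :=
  by_contra fun hij => h.not_sAnti (hKK i j hij u hu v hv)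

lemma not_adj_of_anti_of_anti {A B : Set V} (hA : T.StrongStable A) (hB : T.StrongStable B)
    (hAB : T.SComplete A B) {x y z : V} (hx : x ∈ A ∪ B) (hy : y ∈ A ∪ B) (hz : z ∈ A ∪ B)
    (hxy : T.Anti x y) (hyz : T.Anti y z) : ¬ T.Adj x z := by
  have stayA : ∀ {a b}, a ∈ A → b ∈ A ∪ B → T.Anti a b → b ∈ A := fun ha hb hab =>
    hb.resolve_right fun hb => hab.not_sEdge (hAB _ ha _ hb)
  have stayB : ∀ {a b}, a ∈ B → b ∈ A ∪ B → T.Anti a b → b ∈ B := fun ha hb hab =>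
    hb.resolve_left fun hb => hab.symm.not_sEdge (hAB _ hb _ ha)
  intro hxz
  rcases hx with hx | hx
  · exact hxz.not_sAnti (hA hx (stayA (stayA hx hy hxy) hz hyz) hxz.1)
  · exact hxz.not_sAnti (hB hx (stayB (stayB hx hy hxy) hz hyz) hxz.1)

namespace IsAntiholeWalk

variable {k : ℕ} {f : ℤ → V} {X : Set V}

lemma not_triangleFreeOn (hf : T.IsAntiholeWalk k f) {a b c : ℤ} (hab : 2 ≤ b - a)
    (hbc : 2 ≤ c - b) (hac : c - a + 2 ≤ k) (ha : f a ∈ X) (hb : f b ∈ X) (hc : f c ∈ X) :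
    ¬ T.TriangleFreeOn X := fun hX =>
  hX _ ha _ hb _ hc
    ⟨hf.adj a b hab (by omega), hf.adj a c (by omega) hac, hf.adj b c hbc (by omega)⟩

lemma not_triangleFreeOn_of_forall_mem_or_succ_mem (hf : T.IsAntiholeWalk k f) (hk : 7 ≤ k)
    (hX : ∀ n, f n ∈ X ∨ f (n + 1) ∈ X) : ¬ T.TriangleFreeOn X := by
  have step : ∀ m n : ℤ, n = m + 1 → f m ∉ X → f n ∈ X := fun m n h hm =>
    h ▸ (hX m).resolve_left hm
  by_cases hall : ∀ n, f n ∈ X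
  · exact hf.not_triangleFreeOn (a := 0) (b := 2) (c := 4) (by norm_num) (by norm_num)
      (by omega) (hall 0) (hall 2) (hall 4)
  obtain ⟨j, hj⟩ := not_forall.mp hall
  have hprev : f (j - 1) ∈ X := by_contra fun h => hj (step _ _ (by omega) h)
  by_cases h3 : f (j + 3) ∈ X
  · exact hf.not_triangleFreeOn (a := j - 1) (b := j + 1) (c := j + 3) (by omega) (by omega)
      (by omega) hprev (step _ _ rfl hj) h3
  · exact hf.not_triangleFreeOn (a := j - 1) (b := j + 2) (c := j + 4) (by omega) (by omega)
      (by omega) hprev (by_contra fun h => h3 (step _ _ (by omega) h)) (step _ _ (by omega) h3)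

lemma mem_or_succ_mem {ι : Type*} {K : ι → Set V} (hf : T.IsAntiholeWalk k f) (hk : 7 ≤ k)
    (hcover : ∀ v ∉ X, ∃ i, v ∈ K i) (hK : ∀ i, T.StrongClique (K i))
    (hKK : ∀ i j, i ≠ j → T.SAnticomplete (K i) (K j))
    (hN : ∀ i, ∀ v ∈ K i, ∃ A B : Set V, A ∪ B = {x ∈ X | T.Adj v x} ∧
      T.StrongStable A ∧ T.StrongStable B ∧ T.SComplete A B)
    (n : ℤ) : f n ∈ X ∨ f (n + 1) ∈ X := by
  by_contra! hout
  obtain ⟨p, hp⟩ := hcover _ hout.1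
  obtain ⟨q, hq⟩ := hcover _ hout.2
  have hpq : p ≠ q := by
    rintro rfl
    exact (hK p).not_anti hp hq (hf.anti n (n + 1) rfl)
  have far_mem : ∀ l, n + 3 ≤ l → l + 2 ≤ n + k → f l ∈ X := fun l hlo hhi => by_contra fun hl =>
    let ⟨r, hr⟩ := hcover _ hl
    hpq ((eq_of_adj_of_sAnticomplete hKK hp hr (hf.adj n l (by omega) (by omega))).trans
      (eq_of_adj_of_sAnticomplete hKK hq hr (hf.adj (n + 1) l (by omega) (by omega))).symm)
  obtain ⟨A, B, hAB, hA, hB, hcomplete⟩ := hN p _ hp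
  have nbr : ∀ d : ℤ, 3 ≤ d → d ≤ 5 → f (n + d) ∈ A ∪ B := fun d hlo hhi => by
    rw [hAB]
    exact ⟨far_mem _ (by omega) (by omega), hf.adj _ _ (by omega) (by omega)⟩
  exact not_adj_of_anti_of_anti hA hB hcomplete (nbr 3 le_rfl (by norm_num))
    (nbr 4 (by norm_num) (by norm_num)) (nbr 5 (by norm_num) le_rfl) (hf.anti _ _ (by ring))
    (hf.anti _ _ (by ring)) (hf.adj _ _ (by omega) (by omega))

end IsAntiholeWalk

end Trigraph

theorem inT1_no_long_antihole_general {V : Type} (T : Trigraph V) (hT : T.InT1) :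
    ∀ k : ℕ, 7 ≤ k → ∀ h : Fin k → V, ¬ T.compl.IsHole k h := by
  intro k hk h hh
  obtain ⟨-, X, t, K, hU, -, -, hX, hK, hKK, hN⟩ := hT
  obtain ⟨f, hf⟩ := Trigraph.exists_isAntiholeWalk_of_isHole_compl hh
  have hcover : ∀ v ∉ X, ∃ i, v ∈ K i := fun v hv =>
    Set.mem_iUnion.mp ((hU.symm ▸ Set.mem_univ v : v ∈ X ∪ ⋃ i, K i).resolve_left hv)
  have hN' : ∀ i, ∀ v ∈ K i, ∃ A B : Set V, A ∪ B = {x ∈ X | T.Adj v x} ∧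
      T.StrongStable A ∧ T.StrongStable B ∧ T.SComplete A B := fun i v hv =>
    let ⟨A, B, hAB, _, hA, hB, hc⟩ := hN i v hv
    ⟨A, B, hAB, hA, hB, hc⟩
  exact hf.not_triangleFreeOn_of_forall_mem_or_succ_mem hk
    (hf.mem_or_succ_mem hk hcover hK hKK hN') hX

/-- A trigraph in the class `𝒯₁` contains no antihole of length at least 7. -/
theorem inT1_no_long_antihole {V : Type} [Fintype V] (T : Trigraph V) (hT : T.InT1) :
    ∀ k : ℕ, 7 ≤ k → ∀ h : Fin k → V, ¬ T.compl.IsHole k h :=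
  inT1_no_long_antihole_general T hT
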